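/- arXiv:1307.6248 — 3 statements merged into one kernel-verified Lean document; each statement's English description precedes it below -/
import Mathlib

section
/- In the category of presheaves of sets on a small category, consider a commutative cube whose bottom face is a pushout along a monomorphism A ↪ B, and whose left and back faces are pullbacks. Then the top face is a pushout if and only if the front and right faces are pullbacks. -/
open CategoryTheory Limits

universe u

/-- Adhesivity of presheaf categories: given a commutative cube in `Set^{Cᵒᵖ}` whose
bottom face is a pushout along a monomorphism `ab : A ⟶ B`, and whose left face
`(X, Y, A, B)` and back face `(X, Z, A, C)` are pullbacks, the top face is a pushout if
and only if the front face `(Y, W, B, D)` and the right face `(Z, W, C, D)` are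
pullbacks. -/
theorem stmt2 {C : Type u} [SmallCategory C]
    {A B Cc D X Y Z W : Cᵒᵖ ⥤ Type u}
    (ab : A ⟶ B) (ac : A ⟶ Cc) (bd : B ⟶ D) (cd : Cc ⟶ D)
    (xy : X ⟶ Y) (xz : X ⟶ Z) (yw : Y ⟶ W) (zw : Z ⟶ W)
    (xa : X ⟶ A) (yb : Y ⟶ B) (zc : Z ⟶ Cc) (wd : W ⟶ D)
    [Mono ab]
    (hbot : IsPushout ab ac bd cd)
    (hleft : IsPullback xy xa yb ab)
    (hback : IsPullback xz xa zc ac)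
    (htop : xy ≫ yw = xz ≫ zw)
    (hfront : yw ≫ wd = yb ≫ bd)
    (hright : zw ≫ wd = zc ≫ cd) :
    IsPushout xy xz yw zw ↔
      (IsPullback yw yb wd bd ∧ IsPullback zw zc wd cd) :=
  Adhesive.van_kampen hbot xy xz yw zw xa yb zc wd hleft hback ⟨hfront⟩ ⟨hright⟩ ⟨htop⟩
end

section
/- Let κ be an inaccessible cardinal and let p : E → B be a κ-small function of sets. Then for any set B' and function g : B' → B, if g is κ-small then the pullback E ×_B B' → B' is κ-small; moreover, if f : A → B is κ-small, then the 'dependent product' Π_f(p), whose fiber over b ∈ B is the set of sections over f⁻¹(b) of the pullback of p, is also κ-small. -/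
open Cardinal

/-- A function is `κ`-small if all of its fibers have cardinality less than `κ`. -/
def KappaSmall {X Y : Type u} (κ : Cardinal.{u}) (h : X → Y) : Prop :=
  ∀ y : Y, #{x : X // h x = y} < κ

/-!
The fiber of the pullback `E ×_B B' → B'` over `b'` is the fiber of `p` over `g b'`, so pullback
preserves `κ`-smallness for any `κ`. The fiber of `Π_f(p')` over `b` is the product, over the
fewer than `κ` points `a` of `f⁻¹(b)`, of the fibers `p'⁻¹(a)`; such a product is bounded by
`(sup_a #p'⁻¹(a)) ^ #f⁻¹(b)`, where the supremum is `< κ` by regularity and the power is `< κ`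
because `κ` is a strong limit.
-/

namespace Cardinal

theorem IsStrongLimit.power_lt {κ a b : Cardinal.{u}} (hκ : IsStrongLimit κ)
    (ha : a < κ) (hb : b < κ) : a ^ b < κ :=
  calc a ^ b ≤ (2 ^ a) ^ b := power_le_power_right (cantor a).le
    _ = 2 ^ (a * b) := by rw [← power_mul]
    _ < κ := hκ.isStrongPrelimit (mul_lt_of_lt hκ.aleph0_le ha hb)

theorem IsInaccessible.prod_lt {κ : Cardinal.{u}} (hκ : IsInaccessible κ) {ι : Type u}
    (hι : #ι < κ) {c : ι → Cardinal.{u}} (hc : ∀ i, c i < κ) : prod c < κ := by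
  have hsup : ⨆ i, c i < κ := iSup_lt_of_lt_cof_ord (by rwa [hκ.isRegular.cof_ord]) hc
  calc prod c ≤ prod fun _ : ι => ⨆ i, c i :=
        prod_le_prod _ _ fun i => le_ciSup bddAbove_of_small i
    _ = (⨆ i, c i) ^ #ι := prod_const' _ _
    _ < κ := hκ.isStrongLimit.power_lt hsup hι

end Cardinal

namespace KappaSmall

variable {κ : Cardinal.{u}}

theorem pullback {E B B' : Type u} {p : E → B} (hp : KappaSmall κ p) (g : B' → B) :
    KappaSmall κ (fun x : {y : E × B' // p y.1 = g y.2} => x.1.2) := by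
  intro b'
  have fiber_equiv :
      {x : {y : E × B' // p y.1 = g y.2} // x.1.2 = b'} ≃ {e : E // p e = g b'} :=
    { toFun := fun x => ⟨x.1.1.1, by rw [x.1.2, x.2]⟩
      invFun := fun e => ⟨⟨⟨e.1, b'⟩, e.2⟩, rfl⟩
      left_inv := fun ⟨⟨⟨_, _⟩, _⟩, rfl⟩ => rfl
      right_inv := fun _ => rfl }
  rw [mk_congr fiber_equiv]
  exact hp (g b')

theorem mk_sections_lt (hκ : κ.IsInaccessible) {A B E : Type u} {f : A → B}
    (hf : KappaSmall κ f) {p : E → A} (hp : KappaSmall κ p) (b : B) :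
    #{s : {a : A // f a = b} → E // ∀ a, p (s a) = a.1} < κ := by
  rw [mk_congr (Equiv.subtypePiEquivPi (α := {a : A // f a = b}) (β := fun _ => E)
    (p := fun a e => p e = a.1)), mk_pi]
  exact hκ.prod_lt (hf b) fun a => hp a.1

end KappaSmall

/-- Let `κ` be inaccessible and `p : E → B` a `κ`-small function of sets.  Then:
(1) for any `κ`-small `g : B' → B`, the pullback `E ×_B B' → B'` is `κ`-small; and
(2) for any `κ`-small `f : A → B` and any `κ`-small `p' : E' → A`, the dependent product
`Π_f(p')`, whose fiber over `b` consists of the sections over `f⁻¹(b)` of `p'`, is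
`κ`-small. -/
theorem stmt5 {E B : Type u} (κ : Cardinal.{u}) (hκ : κ.IsInaccessible)
    (p : E → B) (hp : KappaSmall κ p) :
    (∀ (B' : Type u) (g : B' → B), KappaSmall κ g →
      KappaSmall κ (fun x : {y : E × B' // p y.1 = g y.2} => x.1.2)) ∧
    (∀ (A : Type u) (f : A → B), KappaSmall κ f →
      ∀ (E' : Type u) (p' : E' → A), KappaSmall κ p' →
        ∀ b : B, #{s : {a : A // f a = b} → E' // ∀ a, p' (s a) = a.1} < κ) :=
  ⟨fun _ g _ => hp.pullback g,
    fun _ _ hf _ _ hp' => KappaSmall.mk_sections_lt hκ hf hp'⟩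
end

section
/- Let λ be a limit ordinal and suppose given, in the category of presheaves of sets on a small category, a λ-indexed transfinite sequence of monomorphisms A₀ ↪ A₁ ↪ ⋯ with colimit A_λ, together with a compatible sequence of objects X_α over A_α such that for all α < β < λ the square (X_α, X_β, A_α, A_β) is a pullback. If for each α < λ the square (X_α, colim X, A_α, A_λ) is a pullback, then the top row X₀ → X₁ → ⋯ has colimit equal to the given cocone, and conversely: the top row is a colimit diagram if and only if all squares over the colimit are pullbacks. -/
open CategoryTheory Limits

universe u

/-!
Both sides can be checked objectwise, so it suffices to work in `Type`, where a filtered colimit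
is described elementwise: every element comes from some stage, and two elements of one stage are
identified in the colimit iff they are already identified at a later stage. If `cX` is a colimit,
the pullback squares between stages turn this description of `X` and of `A` into the statement
that each square over the colimit is a pullback. Conversely, the pullback squares over the colimit
lift the description of `c.pt` to `cX.pt`.
-/

namespace CategoryTheory.Limits.Types

variable {J : Type*} [Category* J] [IsFilteredOrEmpty J] {A X : J ⥤ Type u} {q : X ⟶ A}
  {c : Cocone A} {cX : Cocone X} {f : cX.pt ⟶ c.pt}

lemma isPullback_ι_of_isColimit_of_equifibered (hq : NatTrans.Equifibered q) (hc : IsColimit c)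
    (hover : ∀ j, cX.ι.app j ≫ f = q.app j ≫ c.ι.app j) (hcX : IsColimit cX) (i : J) :
    IsPullback (cX.ι.app i) (q.app i) f (c.ι.app i) := by
  refine (isPullback_iff _ _ _ _).2 ⟨hover i, ?_, ?_⟩
  · rintro x y ⟨hxy, hqxy⟩
    obtain ⟨j, g, hg⟩ := (FilteredColimit.isColimit_eq_iff' hcX x y).1 hxy
    exact ext_of_isPullback (hq g) hg hqxy
  · intro x a hxa
    obtain ⟨j, y, rfl⟩ := jointly_surjective_of_isColimit hcX x
    have hya : c.ι.app j (q.app j y) = c.ι.app i a := by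
      rw [← hxa]; exact (ConcreteCategory.congr_hom (hover j) y).symm
    obtain ⟨k, g, g', hk⟩ := (FilteredColimit.isColimit_eq_iff A hc).1 hya
    have hyk : q.app k (X.map g y) = A.map g' a := by
      rw [← hk]; exact NatTrans.naturality_apply q g y
    obtain ⟨z, hz, rfl⟩ := exists_of_isPullback (hq g') (X.map g y) a hyk
    refine ⟨z, ?_, rfl⟩
    calc cX.ι.app i z = cX.ι.app k (X.map g' z) := (cX.w_apply g' z).symm
      _ = cX.ι.app k (X.map g y) := by rw [hz]
      _ = cX.ι.app j y := cX.w_apply g y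

noncomputable def isColimitOfIsPullbackι (hc : IsColimit c)
    (hP : ∀ j, IsPullback (cX.ι.app j) (q.app j) f (c.ι.app j)) : IsColimit cX :=
  FilteredColimit.isColimitOf' X cX
    (fun x => by
      obtain ⟨i, a, ha⟩ := jointly_surjective_of_isColimit hc (f x)
      obtain ⟨y, hy, -⟩ := exists_of_isPullback (hP i) x a ha.symm
      exact ⟨i, y, hy.symm⟩)
    (fun i x y hxy => by
      have hqxy : c.ι.app i (q.app i x) = c.ι.app i (q.app i y) := by
        have hw := ConcreteCategory.congr_hom (hP i).w
        simp only [ConcreteCategory.comp_apply] at hw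
        rw [← hw, ← hw, hxy]
      obtain ⟨j, g, hg⟩ := (FilteredColimit.isColimit_eq_iff' hc _ _).1 hqxy
      refine ⟨j, g, ext_of_isPullback (hP j) ?_ ?_⟩
      · rw [cX.w_apply g x, cX.w_apply g y, hxy]
      · rw [NatTrans.naturality_apply q g x, NatTrans.naturality_apply q g y]
        exact hg)

end CategoryTheory.Limits.Types

theorem NatTrans.Equifibered.nonempty_isColimit_iff_forall_isPullback
    {J K : Type*} [Category* J] [Category* K] [IsFilteredOrEmpty J]
    [HasColimitsOfShape J (Type u)] {A X : J ⥤ K ⥤ Type u} {q : X ⟶ A}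
    {c : Cocone A} {cX : Cocone X} {f : cX.pt ⟶ c.pt}
    (hq : NatTrans.Equifibered q) (hc : IsColimit c)
    (hover : ∀ j, cX.ι.app j ≫ f = q.app j ≫ c.ι.app j) :
    Nonempty (IsColimit cX) ↔ ∀ j, IsPullback (cX.ι.app j) (q.app j) f (c.ι.app j) := by
  let ev k := (evaluation K (Type u)).obj k
  constructor
  · rintro ⟨hcX⟩ j
    refine IsPullback.of_forall_isPullback_app fun k => ?_
    exact Types.isPullback_ι_of_isColimit_of_equifibered (q := Functor.whiskerRight q (ev k))
      (c := (ev k).mapCocone c) (cX := (ev k).mapCocone cX) (f := f.app k)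
      (hq.whiskerRight _) (isColimitOfPreserves _ hc) (fun j => congr_app (hover j) k)
      (isColimitOfPreserves _ hcX) j
  · intro hP
    exact ⟨evaluationJointlyReflectsColimits _ fun k =>
      Types.isColimitOfIsPullbackι (q := Functor.whiskerRight q (ev k))
        (c := (ev k).mapCocone c) (cX := (ev k).mapCocone cX) (f := f.app k)
        (isColimitOfPreserves _ hc) fun j => (hP j).app k⟩

theorem stmt18_general {C : Type u} [SmallCategory C] (lam : Ordinal.{u})
    (A X : lam.ToType ⥤ (Cᵒᵖ ⥤ Type u))
    (q : X ⟶ A)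
    (hpb : ∀ (α β : lam.ToType) (h : α ⟶ β),
      IsPullback (X.map h) (q.app α) (q.app β) (A.map h))
    (c : Cocone A) (hc : IsColimit c)
    (cX : Cocone X) (f : cX.pt ⟶ c.pt)
    (hover : ∀ α : lam.ToType, cX.ι.app α ≫ f = q.app α ≫ c.ι.app α) :
    Nonempty (IsColimit cX) ↔
      ∀ α : lam.ToType, IsPullback (cX.ι.app α) (q.app α) f (c.ι.app α) :=
  NatTrans.Equifibered.nonempty_isColimit_iff_forall_isPullback (fun _ _ h => hpb _ _ h) hc hover

/-- Exhaustivity of presheaf categories: let `lam` be a limit ordinal, `A` a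
`lam`-indexed transfinite sequence of monomorphisms of presheaves of sets on a small
category `C` with colimit cocone `c`, and `q : X ⟶ A` a compatible sequence of objects
over the `A α` such that for all `α ≤ β` the square `(X α, X β, A α, A β)` is a
pullback.  Given a cocone `cX` on `X` lying over `c` via `f : cX.pt ⟶ c.pt`, the cocone
`cX` is a colimit if and only if for every `α` the square `(X α, cX.pt, A α, c.pt)` is a
pullback. -/
theorem stmt18 {C : Type u} [SmallCategory C] (lam : Ordinal.{u}) (hlam : Order.IsSuccLimit lam)
    (A X : lam.ToType ⥤ (Cᵒᵖ ⥤ Type u))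
    (hmono : ∀ (α β : lam.ToType) (h : α ⟶ β), Mono (A.map h))
    (q : X ⟶ A)
    (hpb : ∀ (α β : lam.ToType) (h : α ⟶ β),
      IsPullback (X.map h) (q.app α) (q.app β) (A.map h))
    (c : Cocone A) (hc : IsColimit c)
    (cX : Cocone X) (f : cX.pt ⟶ c.pt)
    (hover : ∀ α : lam.ToType, cX.ι.app α ≫ f = q.app α ≫ c.ι.app α) :
    Nonempty (IsColimit cX) ↔
      ∀ α : lam.ToType, IsPullback (cX.ι.app α) (q.app α) f (c.ι.app α) :=
  stmt18_general lam A X q hpb c hc cX f hover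
end
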